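/- arXiv:1404.2740 — 9 statements merged into one kernel-verified Lean document; each statement's English description precedes it below -/
import Mathlib

section
/- Let X_1,…,X_r : ℝ^n → ℝ^n be smooth vector fields that are linearly independent over ℝ and satisfy [X_α, X_β] = Σ_{γ=1}^r c_{αβγ} X_γ for real structure constants c_{αβγ}. Let b_1,…,b_r and f_0, f_1,…,f_r : ℝ → ℝ be smooth, and define vector fields on ℝ × ℝ^n ≅ ℝ^{1+n} by X̄(t,x) = (1, Σ_{α=1}^r b_α(t) X_α(x)) and Y(t,x) = (f_0(t), Σ_{α=1}^r f_α(t) X_α(x)). Then there exists a function h : ℝ × ℝ^n → ℝ with [Y, X̄] = h·X̄ if and only if, setting b_0(t) := f_0'(t), the identities f_α'(t) = f_0(t) b_α'(t) + b_α(t) b_0(t) + Σ_{β,γ=1}^r b_β(t) f_γ(t) c_{γβα} hold for all α = 1,…,r and all t ∈ ℝ; and in that case necessarily h(t,x) = −f_0'(t) for all (t,x). -/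
/-!
Write `Y = f₀ ∂ₜ + V_t` and `X̄ = ∂ₜ + W_t` with `V_t = ∑ fα(t) Xα`, `W_t = ∑ bα(t) Xα`.
In product coordinates `[Y, X̄] = -f₀' ∂ₜ + [V_t, W_t] + ∑ (f₀ bα' - fα') Xα`, and the structure
constants rewrite `[V_t, W_t]` in the frame `Xα`. Comparing `∂ₜ`-components forces `h = -f₀'`;
comparing the remaining components in the linearly independent frame `Xα` gives the system.
-/

open ContDiff VectorField

namespace LieSystem

variable {𝕜 : Type*} [NontriviallyNormedField 𝕜] {E : Type*} [NormedAddCommGroup E]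
  [NormedSpace 𝕜 E] {ι : Type*} [Fintype ι]

def combination (a : ι → 𝕜) (X : ι → E → E) : E → E := fun x => ∑ i, a i • X i x

/-- `k(t) ∂ₜ + ∑ gᵢ(t) Xᵢ` on `𝕜 × E`; with `k = 1` this is the autonomization `X̄`. -/
def liftField (k : 𝕜 → 𝕜) (g : ι → 𝕜 → 𝕜) (X : ι → E → E) : 𝕜 × E → 𝕜 × E :=
  fun p => (k p.1, combination (fun i => g i p.1) X p.2)

theorem combination_eq_sum (a : ι → 𝕜) (X : ι → E → E) :
    combination a X = ∑ i, a i • X i := by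
  ext x
  simp [combination, Finset.sum_apply]

theorem combination_sub (a b : ι → 𝕜) (X : ι → E → E) (x : E) :
    combination (fun i => a i - b i) X x = combination a X x - combination b X x := by
  simp [combination, sub_smul, Finset.sum_sub_distrib]

theorem combination_add (a b : ι → 𝕜) (X : ι → E → E) (x : E) :
    combination (fun i => a i + b i) X x = combination a X x + combination b X x := by
  simp [combination, add_smul, Finset.sum_add_distrib]

theorem combination_smul (s : 𝕜) (a : ι → 𝕜) (X : ι → E → E) (x : E) :
    s • combination a X x = combination (s • a) X x := by
  simp [combination, Finset.smul_sum, smul_smul]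

theorem combination_injective {X : ι → E → E} (hX : LinearIndependent 𝕜 X) {a b : ι → 𝕜}
    (h : ∀ x, combination a X x = combination b X x) : a = b := by
  refine funext (Fintype.linearIndependent_iffₛ.mp hX a b ?_)
  rw [← combination_eq_sum, ← combination_eq_sum]
  exact funext h

theorem hasFDerivAt_combination (a : ι → 𝕜) {X : ι → E → E} {x : E}
    (hX : ∀ i, DifferentiableAt 𝕜 (X i) x) :
    HasFDerivAt (combination a X) (∑ i, a i • fderiv 𝕜 (X i) x) x :=
  HasFDerivAt.fun_sum fun i _ => (hX i).hasFDerivAt.const_smul (a i)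

theorem fderiv_liftField_apply {k : 𝕜 → 𝕜} {g : ι → 𝕜 → 𝕜} {X : ι → E → E}
    {p : 𝕜 × E} (hk : DifferentiableAt 𝕜 k p.1) (hg : ∀ i, DifferentiableAt 𝕜 (g i) p.1)
    (hX : ∀ i, DifferentiableAt 𝕜 (X i) p.2) (w : 𝕜 × E) :
    fderiv 𝕜 (liftField k g X) p w =
      (w.1 * deriv k p.1, fderiv 𝕜 (combination (fun i => g i p.1) X) p.2 w.2 +
        combination (fun i => w.1 * deriv (g i) p.1) X p.2) := by
  have hfst : HasFDerivAt (fun q : 𝕜 × E => k q.1)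
      (deriv k p.1 • ContinuousLinearMap.fst 𝕜 𝕜 E) p :=
    hk.hasDerivAt.comp_hasFDerivAt p (hasFDerivAt_fst (p := p))
  have hsnd : HasFDerivAt (fun q : 𝕜 × E => combination (fun i => g i q.1) X q.2)
      (∑ i, (g i p.1 • (fderiv 𝕜 (X i) p.2).comp (ContinuousLinearMap.snd 𝕜 𝕜 E) +
        (deriv (g i) p.1 • ContinuousLinearMap.fst 𝕜 𝕜 E).smulRight (X i p.2))) p :=
    HasFDerivAt.fun_sum fun i _ =>
      ((hg i).hasDerivAt.comp_hasFDerivAt p (hasFDerivAt_fst (p := p))).smul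
        ((hX i).hasFDerivAt.comp p hasFDerivAt_snd)
  have hlift : HasFDerivAt (liftField k g X) _ p := hfst.prodMk hsnd
  rw [hlift.fderiv, (hasFDerivAt_combination _ hX).fderiv]
  simp [combination, Finset.sum_add_distrib, mul_comm]

theorem lieBracket_combination (a b : ι → 𝕜) {X : ι → E → E} {x : E}
    (hX : ∀ i, DifferentiableAt 𝕜 (X i) x) :
    lieBracket 𝕜 (combination a X) (combination b X) x =
      ∑ i, ∑ j, (a i * b j) • lieBracket 𝕜 (X i) (X j) x := by
  simp only [lieBracket, (hasFDerivAt_combination _ hX).fderiv, combination,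
    _root_.sum_apply, _root_.smul_apply, map_sum, map_smul,
    Finset.smul_sum, smul_smul, smul_sub, Finset.sum_sub_distrib]
  congr 1
  rw [Finset.sum_comm]
  simp only [mul_comm]

theorem lieBracket_combination_of_structureConstants {X : ι → E → E} {c : ι → ι → ι → 𝕜}
    (hc : ∀ i j, lieBracket 𝕜 (X i) (X j) = fun x => ∑ k, c i j k • X k x) (a b : ι → 𝕜)
    {x : E} (hX : ∀ i, DifferentiableAt 𝕜 (X i) x) :
    lieBracket 𝕜 (combination a X) (combination b X) x =
      combination (fun k => ∑ i, ∑ j, a i * b j * c i j k) X x := by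
  simp only [lieBracket_combination a b hX, hc, combination, Finset.smul_sum, Finset.sum_smul,
    smul_smul]
  conv_rhs => rw [Finset.sum_comm]
  exact Finset.sum_congr rfl fun i _ => Finset.sum_comm

theorem lieBracket_liftField {k l : 𝕜 → 𝕜} {f g : ι → 𝕜 → 𝕜} {X : ι → E → E} {p : 𝕜 × E}
    (hk : DifferentiableAt 𝕜 k p.1) (hl : DifferentiableAt 𝕜 l p.1)
    (hf : ∀ i, DifferentiableAt 𝕜 (f i) p.1) (hg : ∀ i, DifferentiableAt 𝕜 (g i) p.1)
    (hX : ∀ i, DifferentiableAt 𝕜 (X i) p.2) :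
    lieBracket 𝕜 (liftField k f X) (liftField l g X) p =
      (k p.1 * deriv l p.1 - l p.1 * deriv k p.1,
        lieBracket 𝕜 (combination (fun i => f i p.1) X) (combination (fun i => g i p.1) X) p.2 +
          combination (fun i => k p.1 * deriv (g i) p.1 - l p.1 * deriv (f i) p.1) X p.2) := by
  rw [lieBracket, fderiv_liftField_apply hl hg hX, fderiv_liftField_apply hk hf hX]
  ext
  · rfl
  · simp only [liftField, lieBracket, Prod.snd_sub]
    rw [combination_sub]
    abel

theorem lieBracket_liftField_liftField_one {X : ι → E → E} {c : ι → ι → ι → 𝕜}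
    (hc : ∀ i j, lieBracket 𝕜 (X i) (X j) = fun x => ∑ k, c i j k • X k x)
    {k : 𝕜 → 𝕜} {f g : ι → 𝕜 → 𝕜} {p : 𝕜 × E} (hk : DifferentiableAt 𝕜 k p.1)
    (hf : ∀ i, DifferentiableAt 𝕜 (f i) p.1) (hg : ∀ i, DifferentiableAt 𝕜 (g i) p.1)
    (hX : ∀ i, DifferentiableAt 𝕜 (X i) p.2) :
    lieBracket 𝕜 (liftField k f X) (liftField (fun _ => 1) g X) p =
      (-deriv k p.1, combination (fun i => k p.1 * deriv (g i) p.1 - deriv (f i) p.1 +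
        ∑ j, ∑ l, g j p.1 * f l p.1 * c l j i) X p.2) := by
  rw [lieBracket_liftField hk (differentiableAt_const _) hf hg hX,
    lieBracket_combination_of_structureConstants hc _ _ hX, combination_add, add_comm]
  simp only [deriv_const', mul_zero, one_mul, zero_sub]
  congr 3 with i
  rw [Finset.sum_comm]
  simp only [mul_comm]

end LieSystem

open LieSystem

/-- A vector field `Y = f₀ ∂/∂t + Σ fα Xα` is a Lie symmetry of the Lie
system `X̄ = ∂/∂t + Σ bα Xα` (i.e. `[Y, X̄] = h X̄` for some function `h`) if and only if the
coefficients satisfy the symmetry system, and in that case `h = -f₀'`. -/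
theorem lie_symmetry_iff_symmetry_system {n r : ℕ}
    (X : Fin r → (Fin n → ℝ) → (Fin n → ℝ))
    (hXsmooth : ∀ α, ContDiff ℝ ∞ (X α))
    (hXind : LinearIndependent ℝ X)
    (c : Fin r → Fin r → Fin r → ℝ)
    (hc : ∀ α β, lieBracket ℝ (X α) (X β) = fun x => ∑ γ, c α β γ • X γ x)
    (b f : Fin r → ℝ → ℝ) (f0 : ℝ → ℝ)
    (hb : ∀ α, ContDiff ℝ ∞ (b α)) (hf : ∀ α, ContDiff ℝ ∞ (f α))
    (hf0 : ContDiff ℝ ∞ f0)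
    (Xbar Y : ℝ × (Fin n → ℝ) → ℝ × (Fin n → ℝ))
    (hXbar : Xbar = fun p => (1, ∑ α, b α p.1 • X α p.2))
    (hY : Y = fun p => (f0 p.1, ∑ α, f α p.1 • X α p.2)) :
    ((∃ h : ℝ × (Fin n → ℝ) → ℝ, ∀ p, lieBracket ℝ Y Xbar p = h p • Xbar p) ↔
      (∀ α t, deriv (f α) t = f0 t * deriv (b α) t + b α t * deriv f0 t +
        ∑ β, ∑ γ, b β t * f γ t * c γ β α)) ∧
    (∀ h : ℝ × (Fin n → ℝ) → ℝ, (∀ p, lieBracket ℝ Y Xbar p = h p • Xbar p) →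
      ∀ p, h p = -deriv f0 p.1) := by
  obtain rfl : Xbar = liftField (fun _ => 1) b X := hXbar
  obtain rfl : Y = liftField f0 f X := hY
  set coeff : ℝ → Fin r → ℝ := fun t α => f0 t * deriv (b α) t - deriv (f α) t +
    ∑ β, ∑ γ, b β t * f γ t * c γ β α
  have bracket (p : ℝ × (Fin n → ℝ)) : lieBracket ℝ (liftField f0 f X)
      (liftField (fun _ => 1) b X) p = (-deriv f0 p.1, combination (coeff p.1) X p.2) :=
    lieBracket_liftField_liftField_one hc (hf0.differentiable (by simp) _)
      (fun α => (hf α).differentiable (by simp) _) (fun α => (hb α).differentiable (by simp) _)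
      (fun α => (hXsmooth α).differentiable (by simp) _)
  have symmetry_iff (h : ℝ × (Fin n → ℝ) → ℝ) :
      (∀ p, lieBracket ℝ (liftField f0 f X) (liftField (fun _ => 1) b X) p =
        h p • liftField (fun _ => 1) b X p) ↔
      ∀ p, h p = -deriv f0 p.1 ∧ combination (coeff p.1) X p.2 =
        combination (h p • fun α => b α p.1) X p.2 := by
    simp only [bracket, liftField, Prod.smul_mk, smul_eq_mul, mul_one, combination_smul,
      Prod.ext_iff, eq_comm (a := h _)]
  have coeff_iff : (∀ t, coeff t = -deriv f0 t • fun α => b α t) ↔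
      ∀ α t, deriv (f α) t = f0 t * deriv (b α) t + b α t * deriv f0 t +
        ∑ β, ∑ γ, b β t * f γ t * c γ β α := by
    simp only [funext_iff, Pi.smul_apply, smul_eq_mul, coeff]
    rw [forall_comm]
    refine forall₂_congr fun α t => ⟨fun h => by linarith, fun h => by linarith⟩
  refine ⟨⟨fun ⟨h, hh⟩ => coeff_iff.1 fun t => combination_injective hXind fun x => ?_,
    fun hsys => ⟨_, (symmetry_iff _).2 fun p => ⟨rfl, by rw [coeff_iff.2 hsys]⟩⟩⟩,
    fun h hh p => ((symmetry_iff h).1 hh p).1⟩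
  obtain ⟨h_eq, hcomb⟩ := (symmetry_iff h).1 hh (t, x)
  rwa [h_eq] at hcomb
end

section
/- Let X_1,…,X_r : ℝ^n → ℝ^n be smooth vector fields with [X_α, X_β] = Σ_γ c_{αβγ} X_γ, let b_1,…,b_r : ℝ → ℝ be smooth, and define X̄(t,x) = (1, Σ_α b_α(t) X_α(x)) on ℝ × ℝ^n. Let 𝔚 ⊆ C^∞(ℝ, ℝ) be a linear subspace closed under the bracket {f, g}_ℝ = f g' − g f'. Define S^V_{X,𝔚} to be the set of vector fields Y on ℝ × ℝ^n of the form Y(t,x) = (f_0(t), Σ_{α=1}^r f_α(t) X_α(x)) with smooth coefficients, such that f_0 ∈ 𝔚 and [Y, X̄] = h·X̄ for some function h on ℝ × ℝ^n. Then S^V_{X,𝔚} is a real linear subspace of the space of vector fields on ℝ × ℝ^n which is closed under the Lie bracket of vector fields; in particular it is a Lie algebra of Lie symmetries of the system associated with X. -/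
open ContDiff VectorField

/-!
A field of the form `Y = f₀ ∂ₜ + Σ fα Xα` brackets with another such field `g₀ ∂ₜ + Σ gα Xα` to
one of the same form, because the `Xα` span a finite-dimensional Lie algebra; its time coefficient
is `{f₀, g₀}_ℝ`, which lies in `𝔚` again.

The symmetry condition `[Y, X̄] = h X̄` says that `Y` preserves the line field spanned by `X̄`.
If also `[Z, X̄] = k X̄`, the Jacobi identity and the Leibniz rule give
`[[Y, Z], X̄] = (Y k - Z h) X̄`. This needs `h` and `k` differentiable: since the time
component of `X̄` is `1`, `h` is the time component of `[Y, X̄]`, hence smooth.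
-/

section LineField

variable {E : Type*} [NormedAddCommGroup E] [NormedSpace ℝ E]

theorem lieBracket_lieBracket_eq_smul {U V W : E → E} {φ ψ : E → ℝ} {x : E}
    (hU : ContDiffAt ℝ 2 U x) (hV : ContDiffAt ℝ 2 V x) (hW : ContDiffAt ℝ 2 W x)
    (hφ : DifferentiableAt ℝ φ x) (hψ : DifferentiableAt ℝ ψ x)
    (hUW : lieBracket ℝ U W = fun y => φ y • W y) (hVW : lieBracket ℝ V W = fun y => ψ y • W y) :
    lieBracket ℝ (lieBracket ℝ U V) W x = (fderiv ℝ ψ x (U x) - fderiv ℝ φ x (V x)) • W x := by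
  have hWx : DifferentiableAt ℝ W x := hW.differentiableAt (by norm_num)
  rw [eq_sub_of_add_eq (leibniz_identity_lieBracket (by simp) hU hV hW).symm, hUW, hVW,
    lieBracket_smul_right hψ hWx, lieBracket_smul_right hφ hWx, hUW, hVW]
  module

end LineField

section Autonomization

variable {F : Type*} [NormedAddCommGroup F] [NormedSpace ℝ F] {Y Z W : ℝ × F → ℝ × F}
  {h k : ℝ × F → ℝ}

theorem contDiff_of_lieBracket_eq_smul {m : WithTop ℕ∞} (hY : ContDiff ℝ (m + 1) Y)
    (hW : ContDiff ℝ (m + 1) W) (hW₁ : ∀ p, (W p).1 = 1)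
    (hh : ∀ p, lieBracket ℝ Y W p = h p • W p) : ContDiff ℝ m h := by
  have h_eq : h = fun p => (lieBracket ℝ Y W p).1 := funext fun p => by simp [hh, hW₁]
  exact h_eq ▸ contDiff_fst.comp (hY.lieBracket_vectorField hW le_rfl)

theorem exists_lieBracket_lieBracket_eq_smul (hY : ContDiff ℝ 2 Y) (hZ : ContDiff ℝ 2 Z)
    (hW : ContDiff ℝ 2 W) (hW₁ : ∀ p, (W p).1 = 1)
    (hh : ∀ p, lieBracket ℝ Y W p = h p • W p) (hk : ∀ p, lieBracket ℝ Z W p = k p • W p) :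
    ∃ l : ℝ × F → ℝ, ∀ p, lieBracket ℝ (lieBracket ℝ Y Z) W p = l p • W p := by
  have hh_smooth := contDiff_of_lieBracket_eq_smul (m := 1) hY hW hW₁ hh
  have hk_smooth := contDiff_of_lieBracket_eq_smul (m := 1) hZ hW hW₁ hk
  exact ⟨fun p => fderiv ℝ k p (Y p) - fderiv ℝ h p (Z p), fun p =>
    lieBracket_lieBracket_eq_smul hY.contDiffAt hZ.contDiffAt hW.contDiffAt
      (hh_smooth.differentiable one_ne_zero p) (hk_smooth.differentiable one_ne_zero p)
      (funext hh) (funext hk)⟩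

end Autonomization

section TimeCombination

variable {ι E : Type*} [Fintype ι] [NormedAddCommGroup E] [NormedSpace ℝ E] {X : ι → E → E}

variable (X) in
def timeCombination (f₀ : ℝ → ℝ) (f : ι → ℝ → ℝ) : ℝ × E → ℝ × E :=
  fun p => (f₀ p.1, ∑ α, f α p.1 • X α p.2)

theorem timeCombination_zero : timeCombination X 0 0 = 0 := by
  ext p <;> simp [timeCombination]

theorem timeCombination_smul (a : ℝ) (f₀ : ℝ → ℝ) (f : ι → ℝ → ℝ) :
    a • timeCombination X f₀ f = timeCombination X (a • f₀) (a • f) := by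
  ext p <;> simp [timeCombination, Finset.smul_sum, smul_smul]

theorem timeCombination_add (f₀ g₀ : ℝ → ℝ) (f g : ι → ℝ → ℝ) :
    timeCombination X f₀ f + timeCombination X g₀ g = timeCombination X (f₀ + g₀) (f + g) := by
  ext p <;> simp [timeCombination, Finset.sum_add_distrib, add_smul]

theorem contDiff_timeCombination {m : WithTop ℕ∞} {f₀ : ℝ → ℝ} {f : ι → ℝ → ℝ}
    (hX : ∀ α, ContDiff ℝ m (X α)) (hf₀ : ContDiff ℝ m f₀) (hf : ∀ α, ContDiff ℝ m (f α)) :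
    ContDiff ℝ m (timeCombination X f₀ f) :=
  (hf₀.comp contDiff_fst).prodMk
    (ContDiff.sum fun α _ => ((hf α).comp contDiff_fst).smul ((hX α).comp contDiff_snd))

theorem differentiable_timeCombination {f₀ : ℝ → ℝ} {f : ι → ℝ → ℝ}
    (hX : ∀ α, Differentiable ℝ (X α)) (hf₀ : Differentiable ℝ f₀)
    (hf : ∀ α, Differentiable ℝ (f α)) :
    Differentiable ℝ (timeCombination X f₀ f) :=
  (hf₀.comp differentiable_fst).prodMk
    (Differentiable.fun_sum fun α _ => ((hf α).comp differentiable_fst).smul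
      ((hX α).comp differentiable_snd))

theorem fderiv_timeCombination_apply {f₀ : ℝ → ℝ} {f : ι → ℝ → ℝ}
    (hX : ∀ α, Differentiable ℝ (X α)) (hf₀ : Differentiable ℝ f₀)
    (hf : ∀ α, Differentiable ℝ (f α)) (p v : ℝ × E) :
    fderiv ℝ (timeCombination X f₀ f) p v =
      (deriv f₀ p.1 * v.1,
        ∑ α, (f α p.1 • fderiv ℝ (X α) p.2 v.2 + (deriv (f α) p.1 * v.1) • X α p.2)) := by
  have : HasFDerivAt (timeCombination X f₀ f)
      ((deriv f₀ p.1 • ContinuousLinearMap.fst ℝ ℝ E).prod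
        (∑ α, (f α p.1 • (fderiv ℝ (X α) p.2).comp (ContinuousLinearMap.snd ℝ ℝ E) +
          (deriv (f α) p.1 • ContinuousLinearMap.fst ℝ ℝ E).smulRight (X α p.2)))) p :=
    ((hf₀ p.1).hasDerivAt.comp_hasFDerivAt p hasFDerivAt_fst).prodMk
      (HasFDerivAt.fun_sum fun α _ => ((hf α p.1).hasDerivAt.comp_hasFDerivAt p
        hasFDerivAt_fst).smul ((hX α p.2).hasFDerivAt.comp p hasFDerivAt_snd))
  rw [this.fderiv]
  simp [mul_comm]

theorem lieBracket_timeCombination {c : ι → ι → ι → ℝ}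
    (hc : ∀ α β, lieBracket ℝ (X α) (X β) = fun x => ∑ γ, c α β γ • X γ x)
    (hX : ∀ α, Differentiable ℝ (X α)) {f₀ g₀ : ℝ → ℝ} {f g : ι → ℝ → ℝ}
    (hf₀ : Differentiable ℝ f₀) (hf : ∀ α, Differentiable ℝ (f α))
    (hg₀ : Differentiable ℝ g₀) (hg : ∀ α, Differentiable ℝ (g α)) :
    lieBracket ℝ (timeCombination X f₀ f) (timeCombination X g₀ g) =
      timeCombination X (fun t => f₀ t * deriv g₀ t - g₀ t * deriv f₀ t)
        (fun γ t => f₀ t * deriv (g γ) t - g₀ t * deriv (f γ) t +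
          ∑ α, ∑ β, f α t * g β t * c α β γ) := by
  ext p
  · simp only [lieBracket_eq, fderiv_timeCombination_apply hX hf₀ hf p,
      fderiv_timeCombination_apply hX hg₀ hg p, timeCombination, Prod.mk_sub_mk]
    ring
  · obtain ⟨t, x⟩ := p
    have hcx : ∑ γ, (∑ α, ∑ β, f α t * g β t * c α β γ) • X γ x =
        ∑ α, ∑ β, (f α t * g β t) • (fderiv ℝ (X β) x (X α x) - fderiv ℝ (X α) x (X β x)) := by
      have key α β : fderiv ℝ (X β) x (X α x) - fderiv ℝ (X α) x (X β x) =
          ∑ γ, c α β γ • X γ x := congrFun (hc α β) x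
      simp_rw [key, Finset.smul_sum, Finset.sum_smul, smul_smul]
      rw [Finset.sum_comm]
      refine Finset.sum_congr rfl fun α _ => Finset.sum_comm
    simp only [lieBracket_eq, fderiv_timeCombination_apply hX hf₀ hf,
      fderiv_timeCombination_apply hX hg₀ hg, timeCombination, Prod.snd_sub, map_sum, map_smul,
      add_smul, sub_smul, Finset.sum_add_distrib, Finset.sum_sub_distrib, hcx, Finset.smul_sum,
      smul_smul, smul_sub, mul_comm (g _ t)]
    rw [Finset.sum_comm]
    simp only [mul_comm (deriv _ t)]
    abel

variable (X) in
def symmetrySpace (𝔚 : Submodule ℝ (ℝ → ℝ)) (Xbar : ℝ × E → ℝ × E) : Set (ℝ × E → ℝ × E) :=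
  {Y | ∃ (f₀ : ℝ → ℝ) (f : ι → ℝ → ℝ), ContDiff ℝ ∞ f₀ ∧ (∀ α, ContDiff ℝ ∞ (f α)) ∧ f₀ ∈ 𝔚 ∧
    Y = timeCombination X f₀ f ∧ ∃ h : ℝ × E → ℝ, ∀ p, lieBracket ℝ Y Xbar p = h p • Xbar p}

variable {𝔚 : Submodule ℝ (ℝ → ℝ)} {Xbar : ℝ × E → ℝ × E}

theorem zero_mem_symmetrySpace : 0 ∈ symmetrySpace X 𝔚 Xbar :=
  ⟨0, 0, contDiff_const, fun _ => contDiff_const, 𝔚.zero_mem, timeCombination_zero.symm, 0,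
    by simp⟩

theorem smul_mem_symmetrySpace (hX : ∀ α, Differentiable ℝ (X α)) {Y : ℝ × E → ℝ × E}
    (hY : Y ∈ symmetrySpace X 𝔚 Xbar) (a : ℝ) : a • Y ∈ symmetrySpace X 𝔚 Xbar := by
  obtain ⟨f₀, f, hf₀, hf, hf₀𝔚, rfl, h, hh⟩ := hY
  have hYdiff := differentiable_timeCombination hX (hf₀.differentiable (by decide))
    fun α => (hf α).differentiable (by decide)
  refine ⟨a • f₀, a • f, hf₀.const_smul a, fun α => (hf α).const_smul a, 𝔚.smul_mem a hf₀𝔚,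
    timeCombination_smul a f₀ f, fun p => a * h p, fun p => ?_⟩
  rw [lieBracket_const_smul_left (hYdiff p), hh, smul_smul]

theorem add_mem_symmetrySpace (hX : ∀ α, Differentiable ℝ (X α)) {Y Z : ℝ × E → ℝ × E}
    (hY : Y ∈ symmetrySpace X 𝔚 Xbar) (hZ : Z ∈ symmetrySpace X 𝔚 Xbar) :
    Y + Z ∈ symmetrySpace X 𝔚 Xbar := by
  obtain ⟨f₀, f, hf₀, hf, hf₀𝔚, rfl, h, hh⟩ := hY
  obtain ⟨g₀, g, hg₀, hg, hg₀𝔚, rfl, k, hk⟩ := hZ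
  have hYdiff := differentiable_timeCombination hX (hf₀.differentiable (by decide))
    fun α => (hf α).differentiable (by decide)
  have hZdiff := differentiable_timeCombination hX (hg₀.differentiable (by decide))
    fun α => (hg α).differentiable (by decide)
  refine ⟨f₀ + g₀, f + g, hf₀.add hg₀, fun α => (hf α).add (hg α), 𝔚.add_mem hf₀𝔚 hg₀𝔚,
    timeCombination_add f₀ g₀ f g, h + k, fun p => ?_⟩
  rw [lieBracket_add_left (hYdiff p) (hZdiff p), hh, hk, Pi.add_apply, add_smul]

theorem lieBracket_mem_symmetrySpace {c : ι → ι → ι → ℝ}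
    (hc : ∀ α β, lieBracket ℝ (X α) (X β) = fun x => ∑ γ, c α β γ • X γ x)
    (hX : ∀ α, ContDiff ℝ 2 (X α)) (hXbar : ContDiff ℝ 2 Xbar) (hXbar₁ : ∀ p, (Xbar p).1 = 1)
    (h𝔚 : ∀ f ∈ 𝔚, ∀ g ∈ 𝔚, (fun t => f t * deriv g t - g t * deriv f t) ∈ 𝔚)
    {Y Z : ℝ × E → ℝ × E} (hY : Y ∈ symmetrySpace X 𝔚 Xbar) (hZ : Z ∈ symmetrySpace X 𝔚 Xbar) :
    lieBracket ℝ Y Z ∈ symmetrySpace X 𝔚 Xbar := by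
  obtain ⟨f₀, f, hf₀, hf, hf₀𝔚, rfl, h, hh⟩ := hY
  obtain ⟨g₀, g, hg₀, hg, hg₀𝔚, rfl, k, hk⟩ := hZ
  have hderiv {u : ℝ → ℝ} (hu : ContDiff ℝ ∞ u) : ContDiff ℝ ∞ (deriv u) :=
    (contDiff_infty_iff_deriv.mp hu).2
  refine ⟨_, _, (hf₀.mul (hderiv hg₀)).sub (hg₀.mul (hderiv hf₀)), fun γ => ?_,
    h𝔚 f₀ hf₀𝔚 g₀ hg₀𝔚,
    lieBracket_timeCombination hc (fun α => (hX α).differentiable (by decide))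
      (hf₀.differentiable (by decide)) (fun α => (hf α).differentiable (by decide))
      (hg₀.differentiable (by decide)) (fun α => (hg α).differentiable (by decide)),
    exists_lieBracket_lieBracket_eq_smul
      (contDiff_timeCombination hX (hf₀.of_le (by decide)) fun α => (hf α).of_le (by decide))
      (contDiff_timeCombination hX (hg₀.of_le (by decide)) fun α => (hg α).of_le (by decide))
      hXbar hXbar₁ hh hk⟩
  have hdf := hderiv (hf γ)
  have hdg := hderiv (hg γ)
  fun_prop

end TimeCombination

theorem symmetry_space_is_lie_algebra_general {n r : ℕ}
    (X : Fin r → (Fin n → ℝ) → (Fin n → ℝ))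
    (hXsmooth : ∀ α, ContDiff ℝ ∞ (X α))
    (c : Fin r → Fin r → Fin r → ℝ)
    (hc : ∀ α β, lieBracket ℝ (X α) (X β) = fun x => ∑ γ, c α β γ • X γ x)
    (b : Fin r → ℝ → ℝ) (hb : ∀ α, ContDiff ℝ ∞ (b α))
    (Xbar : ℝ × (Fin n → ℝ) → ℝ × (Fin n → ℝ))
    (hXbar : Xbar = fun p => (1, ∑ α, b α p.1 • X α p.2))
    (𝔚 : Submodule ℝ (ℝ → ℝ))
    (h𝔚br : ∀ f ∈ 𝔚, ∀ g ∈ 𝔚, (fun t => f t * deriv g t - g t * deriv f t) ∈ 𝔚)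
    (S : Set (ℝ × (Fin n → ℝ) → ℝ × (Fin n → ℝ)))
    (hS : S = {Y | ∃ (f0 : ℝ → ℝ) (f : Fin r → ℝ → ℝ),
      ContDiff ℝ ∞ f0 ∧ (∀ α, ContDiff ℝ ∞ (f α)) ∧ f0 ∈ 𝔚 ∧
      Y = (fun p => (f0 p.1, ∑ α, f α p.1 • X α p.2)) ∧
      ∃ h : ℝ × (Fin n → ℝ) → ℝ, ∀ p, lieBracket ℝ Y Xbar p = h p • Xbar p}) :
    (0 : ℝ × (Fin n → ℝ) → ℝ × (Fin n → ℝ)) ∈ S ∧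
    (∀ Y ∈ S, ∀ a : ℝ, a • Y ∈ S) ∧
    (∀ Y ∈ S, ∀ Z ∈ S, Y + Z ∈ S) ∧
    (∀ Y ∈ S, ∀ Z ∈ S, lieBracket ℝ Y Z ∈ S) := by
  obtain rfl : S = symmetrySpace X 𝔚 Xbar := hS
  obtain rfl : Xbar = timeCombination X 1 b := hXbar
  have hXdiff α := (hXsmooth α).differentiable (by decide)
  have hX₂ α := (hXsmooth α).of_le (by decide : (2 : WithTop ℕ∞) ≤ ∞)
  have hXbar : ContDiff ℝ 2 (timeCombination X 1 b) :=
    contDiff_timeCombination hX₂ contDiff_const fun α => (hb α).of_le (by decide)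
  exact ⟨zero_mem_symmetrySpace, fun Y hY a => smul_mem_symmetrySpace hXdiff hY a,
    fun Y hY Z hZ => add_mem_symmetrySpace hXdiff hY hZ,
    fun Y hY Z hZ => lieBracket_mem_symmetrySpace hc hX₂ hXbar (fun _ => rfl) h𝔚br hY hZ⟩

/-- Given a Lie system `X̄ = ∂/∂t + Σ bα Xα` and a linear subspace
`𝔚 ⊆ C^∞(ℝ,ℝ)` closed under the bracket `{f,g}_ℝ = f g' − g f'`, the set `S^V_{X,𝔚}` of Lie
symmetries `Y = f₀ ∂/∂t + Σ fα Xα` with `f₀ ∈ 𝔚` is a real linear subspace of vector fields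
on `ℝ × ℝ^n` closed under the Lie bracket of vector fields. -/
theorem symmetry_space_is_lie_algebra {n r : ℕ}
    (X : Fin r → (Fin n → ℝ) → (Fin n → ℝ))
    (hXsmooth : ∀ α, ContDiff ℝ ∞ (X α))
    (c : Fin r → Fin r → Fin r → ℝ)
    (hc : ∀ α β, lieBracket ℝ (X α) (X β) = fun x => ∑ γ, c α β γ • X γ x)
    (b : Fin r → ℝ → ℝ) (hb : ∀ α, ContDiff ℝ ∞ (b α))
    (Xbar : ℝ × (Fin n → ℝ) → ℝ × (Fin n → ℝ))
    (hXbar : Xbar = fun p => (1, ∑ α, b α p.1 • X α p.2))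
    (𝔚 : Submodule ℝ (ℝ → ℝ))
    (h𝔚smooth : ∀ f ∈ 𝔚, ContDiff ℝ ∞ f)
    (h𝔚br : ∀ f ∈ 𝔚, ∀ g ∈ 𝔚, (fun t => f t * deriv g t - g t * deriv f t) ∈ 𝔚)
    (S : Set (ℝ × (Fin n → ℝ) → ℝ × (Fin n → ℝ)))
    (hS : S = {Y | ∃ (f0 : ℝ → ℝ) (f : Fin r → ℝ → ℝ),
      ContDiff ℝ ∞ f0 ∧ (∀ α, ContDiff ℝ ∞ (f α)) ∧ f0 ∈ 𝔚 ∧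
      Y = (fun p => (f0 p.1, ∑ α, f α p.1 • X α p.2)) ∧
      ∃ h : ℝ × (Fin n → ℝ) → ℝ, ∀ p, lieBracket ℝ Y Xbar p = h p • Xbar p}) :
    (0 : ℝ × (Fin n → ℝ) → ℝ × (Fin n → ℝ)) ∈ S ∧
    (∀ Y ∈ S, ∀ a : ℝ, a • Y ∈ S) ∧
    (∀ Y ∈ S, ∀ Z ∈ S, Y + Z ∈ S) ∧
    (∀ Y ∈ S, ∀ Z ∈ S, lieBracket ℝ Y Z ∈ S) :=
  symmetry_space_is_lie_algebra_general X hXsmooth c hc b hb Xbar hXbar 𝔚 h𝔚br S hS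
end

section
/- Let c_{αβγ} (α,β,γ = 1,…,r) be real constants, antisymmetric in the first two indices and satisfying the Jacobi identity Σ_{m=1}^r (c_{αβm} c_{mγn} + c_{βγm} c_{mαn} + c_{γαm} c_{mβn}) = 0 for all indices. Let b_1,…,b_r : ℝ → ℝ be continuous. If f, g : ℝ → ℝ^r are differentiable curves both satisfying the linear system f_α'(t) = Σ_{δ,β=1}^r b_β(t) f_δ(t) c_{δβα} for all α (and likewise for g), then the curve h : ℝ → ℝ^r with components h_α(t) = Σ_{β,γ=1}^r c_{βγα} f_β(t) g_γ(t) satisfies the same system: h_α'(t) = Σ_{δ,β=1}^r b_β(t) h_δ(t) c_{δβα} for all α and t. -/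
/-!
Write `[x, y]_α = Σ c_{βγα} x_β y_γ`. The reduced symmetry system reads `f' = [f, b]`, so by the
product rule `[f, g]' = [[f, b], g] + [f, [g, b]]`. Antisymmetry and the Jacobi identity say
exactly that right multiplication by `b` is a derivation, `[[f, g], b] = [[f, b], g] + [f, [g, b]]`,
hence `[f, g]' = [[f, g], b]`.
-/

open Finset

section StructBracket

variable {r : ℕ} (c : Fin r → Fin r → Fin r → ℝ)

def structBracket (x y : Fin r → ℝ) : Fin r → ℝ :=
  fun α => ∑ β, ∑ γ, c β γ α * x β * y γ

lemma structBracket_eq_sum_mul_mul (x a : Fin r → ℝ) (α : Fin r) :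
    structBracket c x a α = ∑ δ, ∑ β, a β * x δ * c δ β α :=
  sum_congr rfl fun δ _ => sum_congr rfl fun β _ => by ring

lemma hasDerivAt_structBracket {x y : Fin r → ℝ → ℝ} {x' y' : Fin r → ℝ} {t : ℝ}
    (hx : ∀ β, HasDerivAt (x β) (x' β) t) (hy : ∀ γ, HasDerivAt (y γ) (y' γ) t) (α : Fin r) :
    HasDerivAt (fun s => structBracket c (x · s) (y · s) α)
      (structBracket c x' (y · t) α + structBracket c (x · t) y' α) t := by
  simp only [structBracket, ← sum_add_distrib]
  refine HasDerivAt.fun_sum fun β _ => HasDerivAt.fun_sum fun γ _ => ?_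
  simpa only [Pi.mul_apply, mul_assoc, mul_add] using ((hx β).mul (hy γ)).const_mul (c β γ α)

lemma structBracket_structBracket_left_apply (x y z : Fin r → ℝ) (α : Fin r) :
    structBracket c (structBracket c x y) z α
      = ∑ β, ∑ γ, ∑ ε, ∑ m, x β * y γ * z ε * (c β γ m * c m ε α) := by
  simp only [structBracket, mul_sum, sum_mul]
  conv_lhs =>
    rw [sum_comm]
    enter [2, ε]
    rw [sum_comm]
    enter [2, β]
    rw [sum_comm]
  conv_lhs => rw [← sum_comm_cycle]
  refine sum_congr rfl fun β _ => sum_congr rfl fun γ _ => sum_congr rfl fun ε _ =>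
    sum_congr rfl fun m _ => by ring

lemma structBracket_structBracket_right_apply (x y z : Fin r → ℝ) (α : Fin r) :
    structBracket c x (structBracket c y z) α
      = ∑ β, ∑ γ, ∑ ε, ∑ m, x β * y γ * z ε * (c β m α * c γ ε m) := by
  simp only [structBracket, mul_sum]
  refine sum_congr rfl fun β _ => ?_
  rw [← sum_comm_cycle]
  refine sum_congr rfl fun γ _ => sum_congr rfl fun ε _ => sum_congr rfl fun m _ => by ring

lemma structConst_leibniz (hanti : ∀ α β γ, c α β γ = -c β α γ)
    (hjac : ∀ α β γ n, ∑ m, (c α β m * c m γ n + c β γ m * c m α n + c γ α m * c m β n) = 0)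
    (β γ ε α : Fin r) :
    ∑ m, c β γ m * c m ε α = ∑ m, (c β ε m * c m γ α + c β m α * c γ ε m) := by
  rw [← sub_eq_zero, ← hjac β γ ε α, ← sum_sub_distrib]
  refine sum_congr rfl fun m _ => ?_
  rw [hanti ε β, hanti m β]
  ring

lemma structBracket_leibniz (hanti : ∀ α β γ, c α β γ = -c β α γ)
    (hjac : ∀ α β γ n, ∑ m, (c α β m * c m γ n + c β γ m * c m α n + c γ α m * c m β n) = 0)
    (x y z : Fin r → ℝ) :
    structBracket c (structBracket c x y) z
      = structBracket c (structBracket c x z) y + structBracket c x (structBracket c y z) := by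
  ext α
  rw [Pi.add_apply, structBracket_structBracket_left_apply, structBracket_structBracket_left_apply,
    structBracket_structBracket_right_apply]
  conv_rhs => enter [1, 2, β]; rw [sum_comm]
  simp only [← sum_add_distrib]
  refine sum_congr rfl fun β _ => sum_congr rfl fun γ _ => sum_congr rfl fun ε _ => ?_
  rw [← mul_sum, structConst_leibniz c hanti hjac, mul_sum]
  exact sum_congr rfl fun m _ => by ring

end StructBracket

theorem bracket_of_solutions_solves_symmetry_system_general {r : ℕ}
    (c : Fin r → Fin r → Fin r → ℝ)
    (hanti : ∀ α β γ, c α β γ = -c β α γ)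
    (hjac : ∀ α β γ n, ∑ m, (c α β m * c m γ n + c β γ m * c m α n + c γ α m * c m β n) = 0)
    (b : Fin r → ℝ → ℝ)
    (f g : Fin r → ℝ → ℝ)
    (hf : ∀ α t, HasDerivAt (f α) (∑ δ, ∑ β, b β t * f δ t * c δ β α) t)
    (hg : ∀ α t, HasDerivAt (g α) (∑ δ, ∑ β, b β t * g δ t * c δ β α) t) :
    ∀ α t, HasDerivAt (fun s => ∑ β, ∑ γ, c β γ α * f β s * g γ s)
      (∑ δ, ∑ β, b β t * (∑ β', ∑ γ', c β' γ' δ * f β' t * g γ' t) * c δ β α) t := by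
  intro α t
  have hf' : ∀ β, HasDerivAt (f β) (structBracket c (f · t) (b · t) β) t := fun β => by
    rw [structBracket_eq_sum_mul_mul]
    exact hf β t
  have hg' : ∀ γ, HasDerivAt (g γ) (structBracket c (g · t) (b · t) γ) t := fun γ => by
    rw [structBracket_eq_sum_mul_mul]
    exact hg γ t
  refine (hasDerivAt_structBracket c hf' hg' α).congr_deriv ?_
  rw [← Pi.add_apply, ← structBracket_leibniz c hanti hjac, structBracket_eq_sum_mul_mul]
  rfl

/-- If `f` and `g` both solve the reduced symmetry system
`f_α' = Σ_{δ,β} b_β f_δ c_{δβα}` of a Lie system with structure constants `c` (antisymmetric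
and satisfying the Jacobi identity), then so does their pointwise bracket
`h_α = Σ_{β,γ} c_{βγα} f_β g_γ`. -/
theorem bracket_of_solutions_solves_symmetry_system {r : ℕ}
    (c : Fin r → Fin r → Fin r → ℝ)
    (hanti : ∀ α β γ, c α β γ = -c β α γ)
    (hjac : ∀ α β γ n, ∑ m, (c α β m * c m γ n + c β γ m * c m α n + c γ α m * c m β n) = 0)
    (b : Fin r → ℝ → ℝ) (hb : ∀ α, Continuous (b α))
    (f g : Fin r → ℝ → ℝ)
    (hf : ∀ α t, HasDerivAt (f α) (∑ δ, ∑ β, b β t * f δ t * c δ β α) t)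
    (hg : ∀ α t, HasDerivAt (g α) (∑ δ, ∑ β, b β t * g δ t * c δ β α) t) :
    ∀ α t, HasDerivAt (fun s => ∑ β, ∑ γ, c β γ α * f β s * g γ s)
      (∑ δ, ∑ β, b β t * (∑ β', ∑ γ', c β' γ' δ * f β' t * g γ' t) * c δ β α) t :=
  bracket_of_solutions_solves_symmetry_system_general c hanti hjac b f g hf hg
end

section
/- Let X_1,…,X_r : ℝ^n → ℝ^n be smooth vector fields that are linearly independent over ℝ and satisfy [X_α, X_β] = Σ_{γ=1}^r c_{αβγ} X_γ. Let b_{αl} : ℝ^s → ℝ (α = 1,…,r; l = 1,…,s) and f_1,…,f_r : ℝ^s → ℝ be smooth. Define vector fields on ℝ^s × ℝ^n by X̄^l(t,x) = (e_l, Σ_{α=1}^r b_{αl}(t) X_α(x)), where e_l is the l-th standard basis vector of ℝ^s, and Y(t,x) = (0, Σ_{β=1}^r f_β(t) X_β(x)). Then [X̄^l, Y] = 0 for every l = 1,…,s if and only if the coefficients satisfy the first-order PDE system ∂f_π/∂t_l (t) = Σ_{α,δ=1}^r b_{αl}(t) f_δ(t) c_{δαπ} for all π = 1,…,r, all l = 1,…,s,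 and all t ∈ ℝ^s. -/
open ContDiff VectorField

/-!
For fields of the form `(e, Σ aᵢ(t) Xᵢ(x))` the Leibniz rule gives
`[(e, Σ aᵢ Xᵢ), (e', Σ gⱼ Xⱼ)] = (0, Σₖ (∂_e gₖ - ∂_{e'} aₖ + Σᵢⱼ aᵢ gⱼ cᵢⱼₖ) Xₖ)`,
so, the `Xₖ` being linearly independent, `[X̄^l, Y]` vanishes iff every coefficient does.
Antisymmetry of the structure constants, again a consequence of linear independence, turns
these coefficient equations into the stated PDE system.
-/

theorem LinearIndependent.forall_sum_smul_apply_eq_zero_iff {R α M ι : Type*} [Ring R]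
    [AddCommGroup M] [Module R M] [Fintype ι] {v : ι → α → M} (hv : LinearIndependent R v)
    (g : ι → R) : (∀ x, ∑ i, g i • v i x = 0) ↔ ∀ i, g i = 0 := by
  refine ⟨fun h => Fintype.linearIndependent_iff.1 hv g ?_, fun h x => by simp [h]⟩
  ext x
  simpa [Finset.sum_apply] using h x

section

variable {𝕜 : Type*} [NontriviallyNormedField 𝕜]
  {E : Type*} [NormedAddCommGroup E] [NormedSpace 𝕜 E]
  {F : Type*} [NormedAddCommGroup F] [NormedSpace 𝕜 F]
  {ι : Type*} [Fintype ι]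

def liftField (e : E) (a : ι → E → 𝕜) (X : ι → F → F) (p : E × F) : E × F :=
  (e, ∑ i, a i p.1 • X i p.2)

theorem fderiv_liftField_apply {e : E} {a : ι → E → 𝕜} {X : ι → F → F} {p : E × F}
    (ha : ∀ i, DifferentiableAt 𝕜 (a i) p.1) (hX : ∀ i, DifferentiableAt 𝕜 (X i) p.2)
    (w : E × F) :
    fderiv 𝕜 (liftField e a X) p w =
      (0, ∑ i, (a i p.1 • fderiv 𝕜 (X i) p.2 w.2 + fderiv 𝕜 (a i) p.1 w.1 • X i p.2)) := by
  have hsmul (i : ι) := ((ha i).hasFDerivAt.comp p hasFDerivAt_fst).smul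
    ((hX i).hasFDerivAt.comp p hasFDerivAt_snd)
  have hlift : HasFDerivAt (liftField e a X) _ p :=
    (hasFDerivAt_const e p).prodMk (HasFDerivAt.fun_sum fun i _ => hsmul i)
  rw [hlift.fderiv]
  simp

theorem lieBracket_liftField {e e' : E} {a g : ι → E → 𝕜} {X : ι → F → F} {p : E × F}
    (ha : ∀ i, DifferentiableAt 𝕜 (a i) p.1) (hg : ∀ i, DifferentiableAt 𝕜 (g i) p.1)
    (hX : ∀ i, DifferentiableAt 𝕜 (X i) p.2) :
    lieBracket 𝕜 (liftField e a X) (liftField e' g X) p =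
      (0, ∑ i, (fderiv 𝕜 (g i) p.1 e - fderiv 𝕜 (a i) p.1 e') • X i p.2 +
        ∑ i, ∑ j, (a i p.1 * g j p.1) • lieBracket 𝕜 (X i) (X j) p.2) := by
  rw [lieBracket_eq]
  dsimp only
  rw [fderiv_liftField_apply hg hX, fderiv_liftField_apply ha hX]
  simp only [liftField, Prod.mk_sub_mk, sub_zero, lieBracket_eq, map_sum, map_smul,
    Finset.smul_sum, smul_smul, smul_sub, sub_smul, Finset.sum_sub_distrib, Finset.sum_add_distrib]
  rw [Finset.sum_comm (f := fun j i => (g j p.1 * a i p.1) • fderiv 𝕜 (X j) p.2 (X i p.2))]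
  simp only [mul_comm (g _ _)]
  congr 1
  abel

theorem structConst_swap {X : ι → F → F} (hX : LinearIndependent 𝕜 X)
    {c : ι → ι → ι → 𝕜} (hc : ∀ i j, lieBracket 𝕜 (X i) (X j) = fun x => ∑ k, c i j k • X k x)
    (i j k : ι) : c j i k = - c i j k := by
  have hsum : ∀ x, ∑ k, (c j i k + c i j k) • X k x = 0 := fun x => by
    have h := lieBracket_swap (𝕜 := 𝕜) (V := X j) (W := X i) (x := x)
    simp only [hc] at h
    simp [add_smul, Finset.sum_add_distrib, h]
  exact eq_neg_of_add_eq_zero_left ((hX.forall_sum_smul_apply_eq_zero_iff _).1 hsum k)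

theorem lieBracket_liftField_of_structConst {e e' : E} {a g : ι → E → 𝕜} {X : ι → F → F}
    {c : ι → ι → ι → 𝕜} (hc : ∀ i j, lieBracket 𝕜 (X i) (X j) = fun x => ∑ k, c i j k • X k x)
    {p : E × F} (ha : ∀ i, DifferentiableAt 𝕜 (a i) p.1)
    (hg : ∀ i, DifferentiableAt 𝕜 (g i) p.1) (hX : ∀ i, DifferentiableAt 𝕜 (X i) p.2) :
    lieBracket 𝕜 (liftField e a X) (liftField e' g X) p =
      (0, ∑ k, (fderiv 𝕜 (g k) p.1 e - fderiv 𝕜 (a k) p.1 e' +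
        ∑ i, ∑ j, a i p.1 * g j p.1 * c i j k) • X k p.2) := by
  rw [lieBracket_liftField ha hg hX]
  simp only [hc, Finset.smul_sum, smul_smul, add_smul, Finset.sum_add_distrib, Finset.sum_smul]
  congr 2
  exact (Finset.sum_congr rfl fun i _ => Finset.sum_comm).trans Finset.sum_comm

end

/-- For a PDE Lie system with autonomizations
`X̄^l(t,x) = (e_l, Σ_α b_{αl}(t) X_α(x))` on `ℝ^s × ℝ^n`, a vector field
`Y(t,x) = (0, Σ_β f_β(t) X_β(x))` satisfies `[X̄^l, Y] = 0` for every `l`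
iff the coefficients solve `∂f_π/∂t_l = Σ_{α,δ} b_{αl} f_δ c_{δαπ}`. -/
theorem pde_lie_symmetry_iff {n r s : ℕ}
    (X : Fin r → (Fin n → ℝ) → (Fin n → ℝ))
    (hXsmooth : ∀ α, ContDiff ℝ ∞ (X α))
    (hXind : LinearIndependent ℝ X)
    (c : Fin r → Fin r → Fin r → ℝ)
    (hc : ∀ α β, lieBracket ℝ (X α) (X β) = fun x => ∑ γ, c α β γ • X γ x)
    (b : Fin r → Fin s → (Fin s → ℝ) → ℝ)
    (hb : ∀ α l, ContDiff ℝ ∞ (b α l))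
    (f : Fin r → (Fin s → ℝ) → ℝ)
    (hf : ∀ α, ContDiff ℝ ∞ (f α))
    (Xbar : Fin s → (Fin s → ℝ) × (Fin n → ℝ) → (Fin s → ℝ) × (Fin n → ℝ))
    (Y : (Fin s → ℝ) × (Fin n → ℝ) → (Fin s → ℝ) × (Fin n → ℝ))
    (hXbar : Xbar = fun l p => ((Pi.single l (1 : ℝ) : Fin s → ℝ), ∑ α, b α l p.1 • X α p.2))
    (hY : Y = fun p => (0, ∑ β, f β p.1 • X β p.2)) :
    (∀ l, lieBracket ℝ (Xbar l) Y = 0) ↔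
      (∀ π l t, fderiv ℝ (f π) t (Pi.single l (1 : ℝ)) =
        ∑ α, ∑ δ, b α l t * f δ t * c δ α π) := by
  have hXd (α) : Differentiable ℝ (X α) := (hXsmooth α).differentiable (by simp)
  have hbd (α l) : Differentiable ℝ (b α l) := (hb α l).differentiable (by simp)
  have hfd (α) : Differentiable ℝ (f α) := (hf α).differentiable (by simp)
  have hbracket : ∀ l p, lieBracket ℝ (Xbar l) Y p =
      (0, ∑ γ, (fderiv ℝ (f γ) p.1 (Pi.single l 1) +
        ∑ α, ∑ β, b α l p.1 * f β p.1 * c α β γ) • X γ p.2) := fun l p => by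
    subst hXbar hY
    have h := lieBracket_liftField_of_structConst (e := Pi.single l 1) (e' := 0) (p := p)
      hc (fun α => hbd α l _) (fun α => hfd α _) (fun α => hXd α _)
    simp only [map_zero, sub_zero] at h
    exact h
  have hswap : ∀ l t π, ∑ α, ∑ δ, b α l t * f δ t * c δ α π =
      -∑ α, ∑ β, b α l t * f β t * c α β π := fun l t π => by
    simp only [← Finset.sum_neg_distrib, ← mul_neg, ← structConst_swap hXind hc]
  calc (∀ l, lieBracket ℝ (Xbar l) Y = 0)
      ↔ ∀ l t x, ∑ γ, (fderiv ℝ (f γ) t (Pi.single l 1) +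
          ∑ α, ∑ β, b α l t * f β t * c α β γ) • X γ x = 0 := by
        simp [funext_iff, hbracket]
    _ ↔ ∀ l t γ, fderiv ℝ (f γ) t (Pi.single l 1) +
          ∑ α, ∑ β, b α l t * f β t * c α β γ = 0 := by
        simp only [hXind.forall_sum_smul_apply_eq_zero_iff]
    _ ↔ _ := by
        simp only [hswap, ← eq_neg_iff_add_eq_zero]
        exact ⟨fun h π l t => h l t π, fun h l t π => h π l t⟩
end

section
/- Let η : ℝ → ℝ be smooth and let f_0 : ℝ → ℝ be a smooth function satisfying the third-order ODE f_0'''(t) + 4 f_0'(t) η(t) + 2 η'(t) f_0(t) = 0 for all t. Define vector fields on ℝ × ℝ (coordinates (t,x)) by X̄(t,x) = (1, η(t) + x²) and Y(t,x) = (f_0(t), −(1/2) f_0''(t) − f_0'(t) x). Then [Y, X̄] = h·X̄ with h(t,x) = −f_0'(t); that is, Y = f_0 ∂/∂t − (1/2) f_0'' ∂/∂x − f_0' x ∂/∂x is a Lie symmetry of the Riccati equation dx/dt = η(t) + x². -/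
open ContDiff VectorField

/-!
Vector fields on the `(t, x)`-plane of the form `a(t) ∂ₜ + (b(t) + c(t) x + d(t) x²) ∂ₓ` are
closed under the Lie bracket: the cubic terms of `[V, W]` cancel. Both `Y` and `X̄` are of this
form, so `[Y, X̄] = -f₀' X̄` reduces to comparing four coefficients, and only the constant one
needs the third-order equation for `f₀`.
-/

def riccatiField (a b c d : ℝ → ℝ) : ℝ × ℝ → ℝ × ℝ :=
  fun p => (a p.1, b p.1 + c p.1 * p.2 + d p.1 * p.2 ^ 2)

section RiccatiField

variable {a b c d : ℝ → ℝ}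

theorem fderiv_riccatiField_apply {p : ℝ × ℝ} (ha : DifferentiableAt ℝ a p.1)
    (hb : DifferentiableAt ℝ b p.1) (hc : DifferentiableAt ℝ c p.1)
    (hd : DifferentiableAt ℝ d p.1) (v : ℝ × ℝ) :
    fderiv ℝ (riccatiField a b c d) p v =
      (v.1 * deriv a p.1,
        v.1 * (deriv b p.1 + deriv c p.1 * p.2 + deriv d p.1 * p.2 ^ 2) +
          v.2 * (c p.1 + 2 * d p.1 * p.2)) := by
  have hfst : HasFDerivAt Prod.fst (ContinuousLinearMap.fst ℝ ℝ ℝ) p := hasFDerivAt_fst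
  have hsnd : HasFDerivAt Prod.snd (ContinuousLinearMap.snd ℝ ℝ ℝ) p := hasFDerivAt_snd
  have h : HasFDerivAt (riccatiField a b c d) _ p :=
    (ha.hasDerivAt.comp_hasFDerivAt p hfst).prodMk
      (((hb.hasDerivAt.comp_hasFDerivAt p hfst).add
        ((hc.hasDerivAt.comp_hasFDerivAt p hfst).mul hsnd)).add
        ((hd.hasDerivAt.comp_hasFDerivAt p hfst).mul (hsnd.pow 2)))
  rw [h.fderiv]
  ext <;> simp <;> ring

variable {a₁ b₁ c₁ d₁ a₂ b₂ c₂ d₂ : ℝ → ℝ}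

theorem lieBracket_riccatiField
    (ha₁ : Differentiable ℝ a₁) (hb₁ : Differentiable ℝ b₁) (hc₁ : Differentiable ℝ c₁)
    (hd₁ : Differentiable ℝ d₁) (ha₂ : Differentiable ℝ a₂) (hb₂ : Differentiable ℝ b₂)
    (hc₂ : Differentiable ℝ c₂) (hd₂ : Differentiable ℝ d₂) :
    lieBracket ℝ (riccatiField a₁ b₁ c₁ d₁) (riccatiField a₂ b₂ c₂ d₂) =
      riccatiField
        (fun t => a₁ t * deriv a₂ t - a₂ t * deriv a₁ t)
        (fun t => a₁ t * deriv b₂ t - a₂ t * deriv b₁ t + b₁ t * c₂ t - b₂ t * c₁ t)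
        (fun t => a₁ t * deriv c₂ t - a₂ t * deriv c₁ t + 2 * (b₁ t * d₂ t - b₂ t * d₁ t))
        (fun t => a₁ t * deriv d₂ t - a₂ t * deriv d₁ t + c₁ t * d₂ t - c₂ t * d₁ t) := by
  funext p
  rw [lieBracket, fderiv_riccatiField_apply (ha₁ _) (hb₁ _) (hc₁ _) (hd₁ _),
    fderiv_riccatiField_apply (ha₂ _) (hb₂ _) (hc₂ _) (hd₂ _)]
  ext
  · simp only [riccatiField, Prod.fst_sub]
  · simp only [riccatiField, Prod.snd_sub]
    ring

end RiccatiField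

/-- If `f₀''' + 4 f₀' η + 2 η' f₀ = 0`, then
`Y = f₀ ∂/∂t − (1/2) f₀'' ∂/∂x − f₀' x ∂/∂x` is a Lie symmetry of the Riccati equation
`dx/dt = η(t) + x²`, with `[Y, X̄] = −f₀'(t) · X̄`. -/
theorem riccati_lie_symmetry (η f0 : ℝ → ℝ)
    (hη : ContDiff ℝ ∞ η) (hf0 : ContDiff ℝ ∞ f0)
    (hode : ∀ t, deriv (deriv (deriv f0)) t + 4 * deriv f0 t * η t + 2 * deriv η t * f0 t = 0)
    (Xbar Y : ℝ × ℝ → ℝ × ℝ)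
    (hXbar : Xbar = fun p => (1, η p.1 + p.2 ^ 2))
    (hY : Y = fun p => (f0 p.1, -(1 / 2) * deriv (deriv f0) p.1 - deriv f0 p.1 * p.2)) :
    lieBracket ℝ Y Xbar = fun p => (-(deriv f0 p.1)) • Xbar p := by
  have hdiff {g : ℝ → ℝ} (hg : ContDiff ℝ ∞ g) : Differentiable ℝ g := hg.differentiable (by simp)
  have : Differentiable ℝ η := hdiff hη
  have : Differentiable ℝ f0 := hdiff hf0
  have : Differentiable ℝ (deriv f0) := hdiff (hf0.iterate_deriv 1)
  have : Differentiable ℝ (deriv (deriv f0)) := hdiff (hf0.iterate_deriv 2)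
  have hXbar' : Xbar = riccatiField (fun _ => 1) η (fun _ => 0) (fun _ => 1) := by
    rw [hXbar]; funext p; simp [riccatiField]
  have hY' : Y = riccatiField f0 (fun t => -(1 / 2) * deriv (deriv f0) t)
      (fun t => -deriv f0 t) (fun _ => 0) := by
    rw [hY]; funext p; ext <;> simp only [riccatiField]; ring
  rw [hXbar', hY', lieBracket_riccatiField]
  · funext p
    simp only [riccatiField, deriv_const', deriv_const_mul_field', deriv.fun_neg', Prod.smul_mk,
      smul_eq_mul, Prod.mk.injEq]
    constructor
    · ring
    · linear_combination (1 / 2) * hode p.1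
  all_goals fun_prop
end

section
/- On ℝ⁴ with coordinates (q_0, q_1, q_2, q_3), define the smooth vector fields X_1^ℍ(q) = (1, 0, 0, 0), X_2^ℍ(q) = (q_0, q_1, q_2, q_3), and X_3^ℍ(q) = (q_0² − q_1² − q_2² − q_3², 2 q_0 q_1, 2 q_0 q_2, 2 q_0 q_3). Then [X_1^ℍ, X_2^ℍ] = X_1^ℍ, [X_1^ℍ, X_3^ℍ] = 2 X_2^ℍ, and [X_2^ℍ, X_3^ℍ] = X_3^ℍ; hence these vector fields span a real Lie algebra isomorphic to sl(2,ℝ), and the quaternionic Riccati equation dq/dt = b_1(t) + b_2(t) q + b_3(t) q² with real t-dependent coefficients is an sl(2,ℝ)-Lie system. -/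
/-!
Writing `(q₀, q₁, q₂, q₃)` for the quaternion `q`, the three fields are `q ↦ 1`, `q ↦ q` and
`q ↦ q²`. For any bilinear product `B` with unit `u`, the quadratic field `Q x = B x x` has
derivative `v ↦ B x v + B v x`. Hence `[u, Q] = 2 · id`, while `[id, Q] = DQ(x) x - Q x = Q` by
Euler's identity for the homogeneous field `Q`; and `[u, id] = u` trivially. The Riccati field with
real coefficients is `b₁ · 1 + b₂ · q + b₃ · q²`.
-/

open VectorField

namespace VectorField

variable {𝕜 : Type*} [NontriviallyNormedField 𝕜] {E : Type*} [NormedAddCommGroup E]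
  [NormedSpace 𝕜 E]

lemma lieBracket_const_left (c : E) (W : E → E) (x : E) :
    lieBracket 𝕜 (fun _ => c) W x = fderiv 𝕜 W x c := by
  simp [lieBracket_eq]

lemma lieBracket_id_left (W : E → E) (x : E) :
    lieBracket 𝕜 (fun y => y) W x = fderiv 𝕜 W x x - W x := by
  simp [lieBracket_eq]

lemma lieBracket_const_id (c : E) :
    lieBracket 𝕜 (fun _ => c) (fun y => y) = fun _ => c := by
  ext x : 1
  simp [lieBracket_const_left]

end VectorField

namespace ContinuousLinearMap

variable {𝕜 : Type*} [NontriviallyNormedField 𝕜] {E : Type*} [NormedAddCommGroup E]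
  [NormedSpace 𝕜 E] (B : E →L[𝕜] E →L[𝕜] E)

lemma fderiv_apply_self (x v : E) : fderiv 𝕜 (fun y => B y y) x v = B x v + B v x := by
  rw [show (fun y => B y y) = fun y => B (id y) (id y) from rfl,
    B.fderiv_of_bilinear differentiableAt_id differentiableAt_id]
  simp

lemma lieBracket_const_apply_self {u : E} (hleft : ∀ x, B u x = x) (hright : ∀ x, B x u = x) :
    lieBracket 𝕜 (fun _ => u) (fun y => B y y) = fun x => (2 : 𝕜) • x := by
  ext x : 1
  rw [lieBracket_const_left, fderiv_apply_self, hleft, hright, two_smul]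

lemma lieBracket_id_apply_self :
    lieBracket 𝕜 (fun y => y) (fun y => B y y) = fun y => B y y := by
  ext x : 1
  rw [lieBracket_id_left, fderiv_apply_self, add_sub_cancel_right]

end ContinuousLinearMap

lemma QuaternionAlgebra.linearEquivTuple_symm_one {R : Type*} [CommRing R] (c₁ c₂ c₃ : R) :
    (QuaternionAlgebra.linearEquivTuple c₁ c₂ c₃).symm ![1, 0, 0, 0] = 1 := by
  rw [LinearEquiv.symm_apply_eq]
  ext i
  fin_cases i <;> simp

noncomputable def quaternionMulTuple : (Fin 4 → ℝ) →L[ℝ] (Fin 4 → ℝ) →L[ℝ] (Fin 4 → ℝ) :=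
  let e := QuaternionAlgebra.linearEquivTuple (-1 : ℝ) 0 (-1)
  (((LinearMap.mul ℝ (Quaternion ℝ)).compl₁₂ e.symm.toLinearMap e.symm.toLinearMap).compr₂
    e.toLinearMap).toContinuousBilinearMap

lemma quaternionMulTuple_apply (p q : Fin 4 → ℝ) :
    quaternionMulTuple p q = QuaternionAlgebra.linearEquivTuple (-1 : ℝ) 0 (-1)
      ((QuaternionAlgebra.linearEquivTuple (-1 : ℝ) 0 (-1)).symm p *
        (QuaternionAlgebra.linearEquivTuple (-1 : ℝ) 0 (-1)).symm q) := rfl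

lemma quaternionMulTuple_self (q : Fin 4 → ℝ) :
    quaternionMulTuple q q = ![q 0 ^ 2 - q 1 ^ 2 - q 2 ^ 2 - q 3 ^ 2,
      2 * q 0 * q 1, 2 * q 0 * q 2, 2 * q 0 * q 3] := by
  ext i
  fin_cases i <;> simp [quaternionMulTuple_apply] <;> ring

lemma quaternionMulTuple_one_left (q : Fin 4 → ℝ) : quaternionMulTuple ![1, 0, 0, 0] q = q := by
  rw [quaternionMulTuple_apply, QuaternionAlgebra.linearEquivTuple_symm_one, one_mul,
    LinearEquiv.apply_symm_apply]

lemma quaternionMulTuple_one_right (q : Fin 4 → ℝ) : quaternionMulTuple q ![1, 0, 0, 0] = q := by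
  rw [quaternionMulTuple_apply, QuaternionAlgebra.linearEquivTuple_symm_one, mul_one,
    LinearEquiv.apply_symm_apply]

/-- The quaternionic Riccati vector fields on `ℝ⁴` (coordinates
`(q₀,q₁,q₂,q₃)`) satisfy the `sl(2,ℝ)` commutation relations, and the quaternionic Riccati
equation with real `t`-dependent coefficients is associated with a `t`-dependent vector
field taking values in their span, so it is an `sl(2,ℝ)`-Lie system. -/
theorem quaternionic_riccati_sl2
    (X1 X2 X3 : (Fin 4 → ℝ) → Fin 4 → ℝ)
    (h1 : X1 = fun _ => ![1, 0, 0, 0])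
    (h2 : X2 = fun q => q)
    (h3 : X3 = fun q => ![q 0 ^ 2 - q 1 ^ 2 - q 2 ^ 2 - q 3 ^ 2,
      2 * q 0 * q 1, 2 * q 0 * q 2, 2 * q 0 * q 3]) :
    lieBracket ℝ X1 X2 = X1 ∧
    (lieBracket ℝ X1 X3 = fun q => (2 : ℝ) • X2 q) ∧
    lieBracket ℝ X2 X3 = X3 ∧
    (∀ (b1 b2 b3 : ℝ → ℝ) (t : ℝ),
      (fun q : Fin 4 → ℝ =>
          ![b1 t + b2 t * q 0 + b3 t * (q 0 ^ 2 - q 1 ^ 2 - q 2 ^ 2 - q 3 ^ 2),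
            b2 t * q 1 + 2 * b3 t * q 0 * q 1,
            b2 t * q 2 + 2 * b3 t * q 0 * q 2,
            b2 t * q 3 + 2 * b3 t * q 0 * q 3]) ∈
        Submodule.span ℝ ({X1, X2, X3} : Set ((Fin 4 → ℝ) → Fin 4 → ℝ))) := by
  have hX3 : X3 = fun q => quaternionMulTuple q q := by
    simp only [h3, quaternionMulTuple_self]
  refine ⟨?_, ?_, ?_, fun b1 b2 b3 t => ?_⟩
  · rw [h1, h2, lieBracket_const_id]
  · rw [h1, h2, hX3, quaternionMulTuple.lieBracket_const_apply_self
      quaternionMulTuple_one_left quaternionMulTuple_one_right]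
  · rw [h2, hX3, quaternionMulTuple.lieBracket_id_apply_self]
  · have hcombination : (fun q : Fin 4 → ℝ =>
          ![b1 t + b2 t * q 0 + b3 t * (q 0 ^ 2 - q 1 ^ 2 - q 2 ^ 2 - q 3 ^ 2),
            b2 t * q 1 + 2 * b3 t * q 0 * q 1,
            b2 t * q 2 + 2 * b3 t * q 0 * q 2,
            b2 t * q 3 + 2 * b3 t * q 0 * q 3]) = b1 t • X1 + b2 t • X2 + b3 t • X3 := by
      subst h1 h2 h3
      ext q i
      fin_cases i <;> simp [Matrix.vecHead, Matrix.vecTail] <;> ring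
    rw [hcombination]
    refine add_mem (add_mem ?_ ?_) ?_ <;>
      exact Submodule.smul_mem _ _ (Submodule.subset_span (by simp))
end

section
/- Fix c_0 ∈ ℝ. On the open set U = {(x,v) ∈ ℝ² : x ≠ 0}, define the vector fields M_1^KS(x,v) = (0, 2x), M_2^KS(x,v) = (x, 2v), and M_3^KS(x,v) = (v, (3/2) v²/x − 2 c_0 x³). Then at every point of U: [M_1^KS, M_2^KS] = M_1^KS, [M_1^KS, M_3^KS] = 2 M_2^KS, and [M_2^KS, M_3^KS] = M_3^KS; hence the first-order system dx/dt = v, dv/dt = (3/2) v²/x − 2 c_0 x³ + 2 η(t) x associated with the second-order Kummer–Schwarz equation is an sl(2,ℝ)-Lie system, being associated with the t-dependent vector field M_3^KS + η(t) M_1^KS. -/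
open VectorField

/-!
`M₁` and `M₂` are linear, hence their own derivatives, and off the line `x = 0` the Jacobian of
`M₃` is `[[0, 1], [-(3/2)v²/x² - 6c₀x², 3v/x]]`. With `[V, W] = DW·V - DV·W` each commutation
relation becomes a rational identity in `x` and `v`.
-/

namespace KummerSchwarz

open ContinuousLinearMap

def M₁ (p : ℝ × ℝ) : ℝ × ℝ := (0, 2 * p.1)

def M₂ (p : ℝ × ℝ) : ℝ × ℝ := (p.1, 2 * p.2)

noncomputable def M₃ (c0 : ℝ) (p : ℝ × ℝ) : ℝ × ℝ :=
  (p.2, 3 / 2 * p.2 ^ 2 / p.1 - 2 * c0 * p.1 ^ 3)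

theorem fderiv_M₁_apply (p q : ℝ × ℝ) : fderiv ℝ M₁ p q = M₁ q := by
  have hM₁ : M₁ = (0 : ℝ × ℝ →L[ℝ] ℝ).prod ((2 : ℝ) • fst ℝ ℝ ℝ) := rfl
  rw [hM₁, ContinuousLinearMap.fderiv]

theorem fderiv_M₂_apply (p q : ℝ × ℝ) : fderiv ℝ M₂ p q = M₂ q := by
  have hM₂ : M₂ = (fst ℝ ℝ ℝ).prod ((2 : ℝ) • snd ℝ ℝ ℝ) := rfl
  rw [hM₂, ContinuousLinearMap.fderiv]

theorem hasFDerivAt_M₃ (c0 : ℝ) {p : ℝ × ℝ} (hx : p.1 ≠ 0) :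
    HasFDerivAt (M₃ c0) ((snd ℝ ℝ ℝ).prod
      ((3 * p.2 / p.1) • snd ℝ ℝ ℝ - (3 / 2 * p.2 ^ 2 / p.1 ^ 2 + 6 * c0 * p.1 ^ 2) • fst ℝ ℝ ℝ))
      p := by
  have hinv : HasFDerivAt (fun q : ℝ × ℝ => q.1⁻¹) ((-(p.1 ^ 2)⁻¹) • fst ℝ ℝ ℝ) p :=
    (hasFDerivAt_inv hx).comp p hasFDerivAt_fst |>.congr_fderiv (by ext <;> simp)
  have hg := (((hasFDerivAt_snd (p := p)).pow 2).const_mul (3 / 2 : ℝ)).mul hinv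
    |>.sub (((hasFDerivAt_fst (p := p)).pow 3).const_mul (2 * c0))
  refine (hasFDerivAt_snd.prodMk hg).congr_fderiv ?_ |>.congr_of_eventuallyEq ?_
  · refine ContinuousLinearMap.ext fun q => Prod.ext rfl ?_
    simp only [Nat.add_one_sub_one, pow_one, nsmul_eq_mul, Nat.cast_ofNat, prod_apply, coe_snd',
      sub_apply, add_apply, smul_apply, coe_fst', smul_eq_mul]
    field_simp
    ring
  · exact .of_forall fun q => by simp [M₃, div_eq_mul_inv]

theorem fderiv_M₃_apply (c0 : ℝ) {p : ℝ × ℝ} (hx : p.1 ≠ 0) (q : ℝ × ℝ) :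
    fderiv ℝ (M₃ c0) p q =
      (q.2, 3 * p.2 / p.1 * q.2 - (3 / 2 * p.2 ^ 2 / p.1 ^ 2 + 6 * c0 * p.1 ^ 2) * q.1) := by
  rw [(hasFDerivAt_M₃ c0 hx).fderiv]
  rfl

theorem lieBracket_M₁_M₂ (p : ℝ × ℝ) : lieBracket ℝ M₁ M₂ p = M₁ p := by
  simp only [lieBracket_eq, fderiv_M₁_apply, fderiv_M₂_apply, M₁, M₂, Prod.mk_sub_mk, Prod.ext_iff]
  constructor <;> ring

theorem lieBracket_M₁_M₃ (c0 : ℝ) {p : ℝ × ℝ} (hx : p.1 ≠ 0) :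
    lieBracket ℝ M₁ (M₃ c0) p = (2 : ℝ) • M₂ p := by
  simp only [lieBracket_eq, fderiv_M₁_apply, fderiv_M₃_apply c0 hx, M₁, M₂, M₃, Prod.mk_sub_mk,
    Prod.smul_mk, smul_eq_mul, Prod.ext_iff]
  refine ⟨by ring, ?_⟩
  field_simp
  ring

theorem lieBracket_M₂_M₃ (c0 : ℝ) {p : ℝ × ℝ} (hx : p.1 ≠ 0) :
    lieBracket ℝ M₂ (M₃ c0) p = M₃ c0 p := by
  simp only [lieBracket_eq, fderiv_M₂_apply, fderiv_M₃_apply c0 hx, M₂, M₃, Prod.mk_sub_mk,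
    Prod.ext_iff]
  refine ⟨by ring, ?_⟩
  field_simp
  ring

theorem system_eq_M₃_add_smul_M₁ (c0 η : ℝ) (p : ℝ × ℝ) :
    ((p.2, 3 / 2 * p.2 ^ 2 / p.1 - 2 * c0 * p.1 ^ 3 + 2 * η * p.1) : ℝ × ℝ) =
      M₃ c0 p + η • M₁ p := by
  simp only [M₁, M₃, Prod.smul_mk, smul_eq_mul, Prod.mk_add_mk, Prod.ext_iff]
  constructor <;> ring

end KummerSchwarz

open KummerSchwarz in
/-- On the open set `{(x,v) : x ≠ 0}` the Kummer--Schwarz vector fields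
`M₁ = 2x ∂/∂v`, `M₂ = x ∂/∂x + 2v ∂/∂v`, `M₃ = v ∂/∂x + ((3/2)v²/x − 2c₀x³) ∂/∂v` satisfy the
`sl(2,ℝ)` commutation relations; the first-order system associated with the second-order
Kummer--Schwarz equation corresponds to the `t`-dependent vector field `M₃ + η(t) M₁`. -/
theorem kummer_schwarz_sl2 (c0 : ℝ)
    (M1 M2 M3 : ℝ × ℝ → ℝ × ℝ)
    (h1 : M1 = fun p => ((0 : ℝ), 2 * p.1))
    (h2 : M2 = fun p => (p.1, 2 * p.2))
    (h3 : M3 = fun p => (p.2, 3 / 2 * p.2 ^ 2 / p.1 - 2 * c0 * p.1 ^ 3)) :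
    ∀ p : ℝ × ℝ, p.1 ≠ 0 →
      lieBracket ℝ M1 M2 p = M1 p ∧
      lieBracket ℝ M1 M3 p = (2 : ℝ) • M2 p ∧
      lieBracket ℝ M2 M3 p = M3 p ∧
      ∀ (η : ℝ → ℝ) (t : ℝ),
        ((p.2, 3 / 2 * p.2 ^ 2 / p.1 - 2 * c0 * p.1 ^ 3 + 2 * η t * p.1) : ℝ × ℝ) =
          M3 p + η t • M1 p := by
  intro p hx
  subst h1 h2 h3
  exact ⟨lieBracket_M₁_M₂ p, lieBracket_M₁_M₃ c0 hx, lieBracket_M₂_M₃ c0 hx,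
    fun η t => system_eq_M₃_add_smul_M₁ c0 (η t) p⟩
end

section
/- Let a, b : ℝ → ℝ be continuously differentiable and fix k, c_1, c_2 ∈ ℝ. Define f_2(t) = k b(t) + c_1 and f_1(t) = [ ∫₀ᵗ ( k a'(s) − a(s)(k b(s) + c_1) ) exp(−∫₀ˢ b(u) du) ds + c_2 ] · exp(∫₀ᵗ b(s) ds). Then for all t ∈ ℝ: f_1'(t) = k a'(t) + b(t) f_1(t) − a(t) f_2(t) and f_2'(t) = k b'(t); that is, (f_0, f_1, f_2) = (k, f_1, f_2) is the general solution of the symmetry system of the Aff(ℝ)-Lie system X = a(t) X_1 + b(t) X_2 (with [X_1, X_2] = X_1) for the choice b_0 = 0. -/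
/-!
With `B(t) = ∫₀ᵗ b`, the formula for `f₁` is the variation-of-constants solution of the linear
equation `x' = b x + g` with source `g = k a' − a f₂`: differentiating the product
`(∫₀ᵗ g e^{−B} + c₂) e^{B}` gives `g + b x`, since `e^{−B} e^{B} = 1`.
The equation for `f₂ = k b + c₁` is immediate.
-/

open Real

noncomputable def variationOfConstants (b g : ℝ → ℝ) (c t : ℝ) : ℝ :=
  ((∫ s in (0 : ℝ)..t, g s * exp (-∫ u in (0 : ℝ)..s, b u)) + c) * exp (∫ s in (0 : ℝ)..t, b s)

theorem hasDerivAt_variationOfConstants {b g : ℝ → ℝ} (hb : Continuous b) (hg : Continuous g)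
    (c t : ℝ) :
    HasDerivAt (variationOfConstants b g c) (g t + b t * variationOfConstants b g c t) t := by
  have hB : ∀ t, HasDerivAt (fun t => ∫ s in (0 : ℝ)..t, b s) (b t) t := fun t =>
    (hb.integral_hasStrictDerivAt 0 t).hasDerivAt
  have hBcont : Continuous fun t => ∫ s in (0 : ℝ)..t, b s :=
    continuous_iff_continuousAt.2 fun t => (hB t).continuousAt
  have hsource : Continuous fun s => g s * exp (-∫ u in (0 : ℝ)..s, b u) :=
    hg.mul (continuous_exp.comp hBcont.neg)
  have hexp : exp (-∫ u in (0 : ℝ)..t, b u) * exp (∫ s in (0 : ℝ)..t, b s) = 1 := by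
    rw [← exp_add, neg_add_cancel, exp_zero]
  refine (((hsource.integral_hasStrictDerivAt 0 t).hasDerivAt.add_const c).mul
    (hB t).exp).congr_deriv ?_
  unfold variationOfConstants
  linear_combination g t * hexp

/-- The explicit formulas
`f₂(t) = k b(t) + c₁` and
`f₁(t) = (∫₀ᵗ (k a'(s) − a(s)(k b(s) + c₁)) e^{−∫₀ˢ b} ds + c₂) e^{∫₀ᵗ b}`
give the general solution of the symmetry system of an `Aff(ℝ)`-Lie system
`X = a(t) X₁ + b(t) X₂` (with `[X₁,X₂] = X₁`) for `b₀ = 0`, i.e.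
`f₁' = k a' + b f₁ − a f₂` and `f₂' = k b'`. -/
theorem aff_symmetry_system_solution (a b : ℝ → ℝ)
    (ha : ContDiff ℝ 1 a) (hb : ContDiff ℝ 1 b)
    (k c1 c2 : ℝ) (f1 f2 : ℝ → ℝ)
    (hf2 : f2 = fun t => k * b t + c1)
    (hf1 : f1 = fun t =>
      ((∫ s in (0 : ℝ)..t, (k * deriv a s - a s * (k * b s + c1)) *
          Real.exp (-∫ u in (0 : ℝ)..s, b u)) + c2) *
        Real.exp (∫ s in (0 : ℝ)..t, b s)) :
    ∀ t : ℝ,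
      HasDerivAt f1 (k * deriv a t + b t * f1 t - a t * f2 t) t ∧
      HasDerivAt f2 (k * deriv b t) t := by
  intro t
  have hf1 : f1 = variationOfConstants b (fun s => k * deriv a s - a s * f2 s) c2 := by
    rw [hf1, hf2]; rfl
  have hsource : Continuous fun s => k * deriv a s - a s * f2 s := by
    rw [hf2]
    have := ha.continuous_deriv_one
    have := ha.continuous
    have := hb.continuous
    fun_prop
  constructor
  · rw [hf1]
    convert hasDerivAt_variationOfConstants hb.continuous hsource c2 t using 1
    ring
  · rw [hf2]
    exact ((hb.differentiable one_ne_zero t).hasDerivAt.const_mul k).add_const c1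
end

section
/- On ℝ² with coordinates (x,v), define the smooth vector fields X_1(x,v) = (v, −3xv − x³) and X_6(x,v) = (2x(v + x²), 2(v² − x⁴)). Then [X_1, X_6] = 0. Consequently, the vector field Ỹ(t,x,v) = (0, X_6(x,v)) on ℝ × ℝ² commutes with the autonomization X̄(t,x,v) = (1, X_1(x,v)), so X_6 is a Lie symmetry of the first-order system dx/dt = v, dv/dt = −3xv − x³ associated with the Painlevé–Ince equation d²x/dt² = −3x (dx/dt) − x³. -/
/-!
The bracket `[X₁, X₆] = DX₆ · X₁ - DX₁ · X₆` of the two polynomial fields is a polynomial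
identity, checked from their explicit Jacobians. On `ℝ × ℝ²` both lifted fields have constant
time component and do not depend on `t`, so the bracket of the lifts is the lift `(0, [X₆, X₁])`
of the bracket, which vanishes by the first part.
-/

open VectorField

section Autonomization

variable {𝕜 : Type*} [NontriviallyNormedField 𝕜]
  {E F : Type*} [NormedAddCommGroup E] [NormedSpace 𝕜 E] [NormedAddCommGroup F] [NormedSpace 𝕜 F]

theorem hasFDerivAt_const_prodMk_comp_snd {V : E → E} {x : F × E} (a : F)
    (hV : DifferentiableAt 𝕜 V x.2) :
    HasFDerivAt (fun q : F × E => (a, V q.2))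
      ((0 : F × E →L[𝕜] F).prod ((fderiv 𝕜 V x.2).comp (.snd 𝕜 F E))) x :=
  (hasFDerivAt_const a x).prodMk (hV.hasFDerivAt.comp x hasFDerivAt_snd)

theorem lieBracket_const_prodMk_comp_snd {V W : E → E} {x : F × E} (a b : F)
    (hV : DifferentiableAt 𝕜 V x.2) (hW : DifferentiableAt 𝕜 W x.2) :
    lieBracket 𝕜 (fun q : F × E => (a, V q.2)) (fun q => (b, W q.2)) x =
      (0, lieBracket 𝕜 V W x.2) := by
  simp [lieBracket_eq, (hasFDerivAt_const_prodMk_comp_snd a hV).fderiv,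
    (hasFDerivAt_const_prodMk_comp_snd b hW).fderiv]

end Autonomization

namespace PainleveInce

def field (p : ℝ × ℝ) : ℝ × ℝ := (p.2, -3 * p.1 * p.2 - p.1 ^ 3)

def symmetry (p : ℝ × ℝ) : ℝ × ℝ := (2 * p.1 * (p.2 + p.1 ^ 2), 2 * (p.2 ^ 2 - p.1 ^ 4))

theorem differentiable_field : Differentiable ℝ field := by
  unfold field; fun_prop

theorem differentiable_symmetry : Differentiable ℝ symmetry := by
  unfold symmetry; fun_prop

theorem fderiv_field_apply (p w : ℝ × ℝ) :
    fderiv ℝ field p w = (w.2, -3 * (p.2 + p.1 ^ 2) * w.1 - 3 * p.1 * w.2) := by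
  unfold field
  rw [DifferentiableAt.fderiv_prodMk (by fun_prop) (by fun_prop)]
  simp (disch := fun_prop) [fderiv_fun_sub, fderiv_fun_mul, fderiv_fun_pow, fderiv_fst,
    fderiv_snd]
  ring

theorem fderiv_symmetry_apply (p w : ℝ × ℝ) :
    fderiv ℝ symmetry p w =
      (2 * (p.2 + 3 * p.1 ^ 2) * w.1 + 2 * p.1 * w.2, 4 * p.2 * w.2 - 8 * p.1 ^ 3 * w.1) := by
  unfold symmetry
  rw [DifferentiableAt.fderiv_prodMk (by fun_prop) (by fun_prop)]
  simp (disch := fun_prop) [fderiv_fun_sub, fderiv_fun_add, fderiv_fun_mul, fderiv_fun_pow,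
    fderiv_fst, fderiv_snd]
  constructor <;> ring

theorem lieBracket_field_symmetry : lieBracket ℝ field symmetry = 0 := by
  funext p
  simp only [lieBracket_eq, fderiv_field_apply, fderiv_symmetry_apply]
  simp only [field, symmetry, Prod.mk_sub_mk, Pi.zero_apply, Prod.mk_eq_zero]
  constructor <;> ring

end PainleveInce

/-- The vector fields `X₁ = v ∂/∂x − (3xv + x³) ∂/∂v` and
`X₆ = 2x(v + x²) ∂/∂x + 2(v² − x⁴) ∂/∂v` on `ℝ²` commute; consequently
`Ỹ = (0, X₆)` commutes with the autonomization `X̄ = ∂/∂t + X₁`, so `X₆` is a Lie symmetry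
of the first-order system associated with the Painlevé--Ince equation. -/
theorem painleve_ince_symmetry
    (X1 X6 : ℝ × ℝ → ℝ × ℝ)
    (h1 : X1 = fun p => (p.2, -3 * p.1 * p.2 - p.1 ^ 3))
    (h6 : X6 = fun p => (2 * p.1 * (p.2 + p.1 ^ 2), 2 * (p.2 ^ 2 - p.1 ^ 4)))
    (Xbar Ytil : ℝ × (ℝ × ℝ) → ℝ × (ℝ × ℝ))
    (hXbar : Xbar = fun q => (1, X1 q.2))
    (hYtil : Ytil = fun q => (0, X6 q.2)) :
    lieBracket ℝ X1 X6 = 0 ∧ lieBracket ℝ Ytil Xbar = 0 := by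
  obtain rfl : X1 = PainleveInce.field := h1
  obtain rfl : X6 = PainleveInce.symmetry := h6
  subst hXbar hYtil
  refine ⟨PainleveInce.lieBracket_field_symmetry, funext fun q => ?_⟩
  rw [lieBracket_const_prodMk_comp_snd _ _
    (PainleveInce.differentiable_symmetry _) (PainleveInce.differentiable_field _),
    lieBracket_swap, PainleveInce.lieBracket_field_symmetry]
  simp
end
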